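/- In a C-space, every irreducible closed set is the closure of a directed subset (with respect to the specialization preorder), and conversely the closure of every directed subset is irreducible closed. -/

import Mathlib

/-!
The order `sle` is the reverse of Mathlib's specialization relation `⤳`, so a set directed for it
is preirreducible (an upper bound of points in two open sets lies in both), and hence so is its
closure. Conversely, given an irreducible closed set `C` in a C-space, take the points `u ∈ C`
whose core has interior meeting `C`. Any two such interiors meet `C` in a common point `z`, and a
core `↑w ∋ z` inside both of them provides an upper bound `w`, which lies in `C` since `C` is
closed and `z ∈ ↑w`. The same cores around the points of `C` show that these `u` are dense in `C`.
-/

/-- The specialization preorder: x ≤ y iff every open set containing x contains y. -/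
def sle {X : Type*} [TopologicalSpace X] (x y : X) : Prop :=
  ∀ U : Set X, IsOpen U → x ∈ U → y ∈ U

/-- The core of a point. -/
def core {X : Type*} [TopologicalSpace X] (x : X) : Set X := {y | sle x y}

open Set

def IsCSpace (X : Type*) [TopologicalSpace X] : Prop :=
  ∀ (x : X) (U : Set X), IsOpen U → x ∈ U → ∃ u : X, x ∈ interior (core u) ∧ core u ⊆ U

section

variable {X : Type*} [TopologicalSpace X]

theorem sle_iff_specializes {x y : X} : sle x y ↔ y ⤳ x :=
  specializes_iff_forall_open.symm

theorem self_mem_core (u : X) : u ∈ core u :=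
  sle_iff_specializes.2 specializes_rfl

theorem IsClosed.mem_of_mem_core {C : Set X} (hC : IsClosed C) {u y : X} (hy : y ∈ core u)
    (hyC : y ∈ C) : u ∈ C :=
  (sle_iff_specializes.1 hy).mem_closed hC hyC

theorem isPreirreducible_of_directedOn_sle {D : Set X} (hD : DirectedOn sle D) :
    IsPreirreducible D := by
  rintro U V hU hV ⟨a, haD, haU⟩ ⟨b, hbD, hbV⟩
  obtain ⟨c, hcD, hac, hbc⟩ := hD a haD b hbD
  exact ⟨c, hcD, hac U hU haU, hbc V hV hbV⟩

theorem isIrreducible_closure_of_directedOn_sle {D : Set X} (hne : D.Nonempty)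
    (hD : DirectedOn sle D) : IsIrreducible (closure D) :=
  IsIrreducible.closure ⟨hne, isPreirreducible_of_directedOn_sle hD⟩

def coreWitnesses (C : Set X) : Set X := {u ∈ C | (interior (core u) ∩ C).Nonempty}

theorem closure_coreWitnesses (hX : IsCSpace X) {C : Set X} (hC : IsClosed C) :
    closure (coreWitnesses C) = C := by
  refine (closure_minimal (fun u hu => hu.1) hC).antisymm fun x hx => ?_
  refine mem_closure_iff.2 fun U hU hxU => ?_
  obtain ⟨u, hxu, huU⟩ := hX x U hU hxU
  exact ⟨u, huU (self_mem_core u), hC.mem_of_mem_core (interior_subset hxu) hx, x, hxu, hx⟩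

theorem directedOn_sle_coreWitnesses (hX : IsCSpace X) {C : Set X} (hC : IsClosed C)
    (hirr : IsPreirreducible C) : DirectedOn sle (coreWitnesses C) := by
  rintro a ⟨-, ha⟩ b ⟨-, hb⟩
  obtain ⟨z, hzC, hza, hzb⟩ := hirr (interior (core a)) (interior (core b))
    isOpen_interior isOpen_interior (by rwa [inter_comm]) (by rwa [inter_comm])
  obtain ⟨w, hzw, hw⟩ := hX z (interior (core a) ∩ interior (core b))
    (isOpen_interior.inter isOpen_interior) ⟨hza, hzb⟩
  have hwab := hw (self_mem_core w)
  exact ⟨w, ⟨hC.mem_of_mem_core (interior_subset hzw) hzC, z, hzw, hzC⟩,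
    interior_subset hwab.1, interior_subset hwab.2⟩

end

/-- In a C-space, the irreducible closed sets are exactly the
closures of directed subsets (w.r.t. the specialization preorder). -/
theorem stmt_11 {X : Type*} [TopologicalSpace X]
    (hC : ∀ (x : X) (U : Set X), IsOpen U → x ∈ U →
      ∃ u : X, x ∈ interior (core u) ∧ core u ⊆ U) :
    ∀ C : Set X,
      (IsClosed C ∧ C.Nonempty ∧
        ∀ A B : Set X, IsClosed A → IsClosed B → C ⊆ A ∪ B → C ⊆ A ∨ C ⊆ B) ↔
      (∃ D : Set X, D.Nonempty ∧
        (∀ a ∈ D, ∀ b ∈ D, ∃ c ∈ D, sle a c ∧ sle b c) ∧ C = closure D) := by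
  intro C
  rw [← isPreirreducible_iff_isClosed_union_isClosed]
  constructor
  · rintro ⟨hcl, hne, hirr⟩
    have hclosure := closure_coreWitnesses hC hcl
    refine ⟨coreWitnesses C, ?_, directedOn_sle_coreWitnesses hC hcl hirr, hclosure.symm⟩
    rwa [← closure_nonempty_iff, hclosure]
  · rintro ⟨D, hne, hdir, rfl⟩
    have hirr := isIrreducible_closure_of_directedOn_sle hne hdir
    exact ⟨isClosed_closure, hirr.nonempty, hirr.isPreirreducible⟩
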